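/- arXiv:2311.11218 — 7 statements merged into one kernel-verified Lean document; each statement's English description precedes it below -/
import Mathlib

section
/- The system of linear equations over Z_2 given by g(XI)+g(IX)+g(XX)=0, g(IZ)+g(ZI)+g(ZZ)=0, g(XZ)+g(ZX)+g(YY)=0, g(XI)+g(IZ)+g(XZ)=0, g(IX)+g(ZI)+g(ZX)=0, g(XX)+g(ZZ)+g(YY)=1 has no solution g: {XI,IX,XX,IZ,ZI,ZZ,XZ,ZX,YY} → Z_2. -/
/-- The nine observables of Mermin's square, as labels. -/
inductive MerminObs : Type
  | XI | IX | XX | IZ | ZI | ZZ | XZ | ZX | YY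
  deriving DecidableEq

open MerminObs

/- Every entry of the square lies in exactly one row and one column, so in characteristic two
the row sums and the column sums of any assignment add up to zero; the six equations demand
that they add up to one. -/

theorem sum_row_sums_add_sum_col_sums {R ι κ : Type*} [Semiring R] [CharP R 2]
    [Fintype ι] [Fintype κ] (a : ι → κ → R) :
    ∑ i, ∑ j, a i j + ∑ j, ∑ i, a i j = 0 := by
  rw [Finset.sum_comm]
  exact CharTwo.add_self_eq_zero _

def merminSquare : Fin 3 → Fin 3 → MerminObs :=
  ![![XI, IX, XX], ![IZ, ZI, ZZ], ![XZ, ZX, YY]]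

/-- The system of `ZMod 2`-linear equations corresponding to the rows and columns of
Mermin's square has no solution. -/
theorem mermin_square_inconsistent :
    ¬ ∃ g : MerminObs → ZMod 2,
      g XI + g IX + g XX = 0 ∧
      g IZ + g ZI + g ZZ = 0 ∧
      g XZ + g ZX + g YY = 0 ∧
      g XI + g IZ + g XZ = 0 ∧
      g IX + g ZI + g ZX = 0 ∧
      g XX + g ZZ + g YY = 1 := by
  rintro ⟨g, h₁, h₂, h₃, h₄, h₅, h₆⟩
  have hsum := sum_row_sums_add_sum_col_sums fun i j ↦ g (merminSquare i j)
  simp only [merminSquare, Fin.sum_univ_three, Matrix.cons_val_zero, Matrix.cons_val_one,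
    Matrix.cons_val] at hsum
  have : (1 : ZMod 2) = 0 := by linear_combination hsum - h₁ - h₂ - h₃ - h₄ - h₅ - h₆
  exact one_ne_zero this
end

section
/- If a measurement scenario's empirical model e has a global distribution d ∈ D_R(E(X)) (i.e., a distribution on global assignments whose marginal to each context C equals e_C), then e has a realization by a factorisable hidden-variable model: there exist a set Λ, a distribution h_Λ on Λ, and for each λ and context C a distribution h_C^λ on E(C) which factors as a product of its single-measurement marginals, such that e_C(s) = Σ_λ h_C^λ(s)·h_Λ(λ) for all C and s. -/
open Finset

variable {X O : Type}

/-- Restriction of an assignment on a context `C` to a sub-context `U ⊆ C`. -/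
def res {U C : Finset X} (h : U ⊆ C) (s : ↥C → O) : ↥U → O :=
  fun x => s ⟨x.1, h x.2⟩

/-- Restriction of a global assignment to a context `C`. -/
def resX (C : Finset X) (s : X → O) : ↥C → O := fun x => s x.1

/-- Marginalization of a distribution on `E(C)` to a sub-context `U ⊆ C`. -/
noncomputable def marg [DecidableEq X] [Fintype O] [DecidableEq O]
    {U C : Finset X} (h : U ⊆ C) (d : (↥C → O) → NNReal) : (↥U → O) → NNReal :=
  fun s => ∑ s' ∈ univ.filter (fun s' : ↥C → O => res h s' = s), d s'

/-- Marginalization of a global distribution to a context `C`. -/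
noncomputable def margX [Fintype X] [DecidableEq X] [Fintype O] [DecidableEq O]
    (C : Finset X) (d : (X → O) → NNReal) : (↥C → O) → NNReal :=
  fun s => ∑ s' ∈ univ.filter (fun s' : X → O => resX C s' = s), d s'

/-- Single-measurement marginal of a distribution on `E(C)` at `m ∈ C`. -/
noncomputable def margPt [DecidableEq X] [Fintype O] [DecidableEq O]
    {C : Finset X} (m : ↥C) (d : (↥C → O) → NNReal) : O → NNReal :=
  fun o => ∑ s' ∈ univ.filter (fun s' : ↥C → O => s' m = o), d s'

/-! Enumerating the global assignments `g` as hidden variables with weights `d g`, each one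
gives the deterministic model `C ↦ δ_{g|C}`. A point mass is compatible on overlaps and equals the
product of its single-measurement marginals, and marginalizing `d` to `C` is exactly the mixture of
these point masses. -/

theorem res_resX {U C : Finset X} (h : U ⊆ C) (s : X → O) : res h (resX C s) = resX U s := rfl

section PointMass

variable [DecidableEq X] [Fintype O] [DecidableEq O]

theorem marg_pi_single {U C : Finset X} (h : U ⊆ C) (t : ↥C → O) :
    marg h (Pi.single t 1) = Pi.single (res h t) 1 := by
  funext s
  simp [marg, Pi.single_apply, eq_comm]

theorem margPt_pi_single {C : Finset X} (m : ↥C) (t : ↥C → O) :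
    margPt m (Pi.single t 1) = Pi.single (t m) 1 := by
  funext o
  simp [margPt, Pi.single_apply, eq_comm]

theorem pi_single_eq_prod_margPt {C : Finset X} (t s : ↥C → O) :
    (Pi.single t 1 : (↥C → O) → NNReal) s = ∏ m : ↥C, margPt m (Pi.single t 1) (s m) := by
  simp only [margPt_pi_single, Pi.single_apply, Finset.prod_boole, Finset.mem_univ, true_implies,
    funext_iff]

theorem margX_eq_sum_pi_single [Fintype X] (C : Finset X) (d : (X → O) → NNReal) (s : ↥C → O) :
    margX C d s = ∑ t : X → O, (Pi.single (resX C t) 1 : (↥C → O) → NNReal) s * d t := by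
  rw [margX, Finset.sum_filter]
  refine Finset.sum_congr rfl fun t _ => ?_
  simp [Pi.single_apply, eq_comm]

end PointMass

/-- If an empirical model `e` has a global distribution, then it is realized by a
factorisable hidden-variable model. -/
theorem global_distribution_gives_factorisable_hv_model
    [Fintype X] [DecidableEq X] [Fintype O] [DecidableEq O]
    (M : Finset (Finset X))
    (e : (C : Finset X) → (↥C → O) → NNReal)
    (d : (X → O) → NNReal)
    (hd1 : ∑ s : X → O, d s = 1)
    (hdm : ∀ C ∈ M, margX C d = e C) :
    ∃ (k : ℕ) (hΛ : Fin k → NNReal)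
      (h : Fin k → (C : Finset X) → (↥C → O) → NNReal),
      (∑ l, hΛ l = 1) ∧
      (∀ l, ∀ C ∈ M, ∑ s : ↥C → O, h l C s = 1) ∧
      (∀ l, ∀ C ∈ M, ∀ C' ∈ M,
        marg (inter_subset_left (s₁ := C) (s₂ := C')) (h l C) =
          marg (inter_subset_right (s₁ := C) (s₂ := C')) (h l C')) ∧
      (∀ l, ∀ C ∈ M, ∀ s : ↥C → O, h l C s = ∏ m : ↥C, margPt m (h l C) (s m)) ∧
      (∀ C ∈ M, ∀ s : ↥C → O, e C s = ∑ l, h l C s * hΛ l) := by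
  let g := (Fintype.equivFin (X → O)).symm
  refine ⟨Fintype.card (X → O), d ∘ g, fun l C => Pi.single (resX C (g l)) 1,
    ?_, ?_, ?_, ?_, ?_⟩
  · exact (Equiv.sum_comp g d).trans hd1
  · intro l C _
    exact Fintype.sum_pi_single' _ _
  · intro l C _ C' _
    rw [marg_pi_single, marg_pi_single, res_resX, res_resX]
  · intro l C _ s
    exact pi_single_eq_prod_margPt _ s
  · intro C hC s
    rw [← hdm C hC, margX_eq_sum_pi_single]
    exact (Equiv.sum_comp g _).symm
end

section
/- The PR-box empirical model has no global probability distribution: there is no distribution d on {0,1}^{a1,a2,b1,b2} such that the marginal of d to each of the four contexts {a1,b1}, {a1,b2}, {a2,b1}, {a2,b2} equals the PR-box distribution (which assigns probability 1/2 to equal outcomes in the first three contexts and probability 1/2 to unequal outcomes in the context {a2,b2}). -/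
/-!
A deterministic assignment `g` with `g a1 = g b1`, `g a1 = g b2` and `g a2 = g b1` also has
`g a2 = g b2`, so every `g` lies outside the support of one of the four PR-box marginals.
Since masses are nonnegative, a global distribution would have to vanish on every `g`,
contradicting total mass one.
-/

open Finset

/-- The four measurements of the (2,2,2) Bell-type scenario. -/
inductive Meas : Type
  | a1 | a2 | b1 | b2
  deriving DecidableEq

instance : Fintype Meas :=
  ⟨{Meas.a1, Meas.a2, Meas.b1, Meas.b2}, by intro x; cases x <;> simp⟩

open Meas

theorem rel_of_ne_zero_of_marginal_eq_ite {X O M : Type*} [Fintype (X → O)] [DecidableEq O]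
    [AddCommMonoid M] [PartialOrder M] [CanonicallyOrderedAdd M]
    {d : (X → O) → M} {x y : X} {c : O → O → Prop} [DecidableRel c] {v : M}
    (hd : ∀ o1 o2 : O,
      (∑ g ∈ univ.filter (fun g : X → O => g x = o1 ∧ g y = o2), d g) =
        if c o1 o2 then v else 0)
    (g : X → O) (hg : d g ≠ 0) : c (g x) (g y) := by
  by_contra hc
  exact hg (sum_eq_zero_iff.mp ((hd _ _).trans (if_neg hc)) g (by simp))

/-- The PR box has no global probability distribution. -/
theorem pr_box_has_no_global_distribution :
    ¬ ∃ d : (Meas → Fin 2) → NNReal,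
      (∑ g : Meas → Fin 2, d g = 1) ∧
      (∀ o1 o2 : Fin 2,
        (∑ g ∈ univ.filter (fun g : Meas → Fin 2 => g a1 = o1 ∧ g b1 = o2), d g) =
          if o1 = o2 then 1/2 else 0) ∧
      (∀ o1 o2 : Fin 2,
        (∑ g ∈ univ.filter (fun g : Meas → Fin 2 => g a1 = o1 ∧ g b2 = o2), d g) =
          if o1 = o2 then 1/2 else 0) ∧
      (∀ o1 o2 : Fin 2,
        (∑ g ∈ univ.filter (fun g : Meas → Fin 2 => g a2 = o1 ∧ g b1 = o2), d g) =
          if o1 = o2 then 1/2 else 0) ∧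
      (∀ o1 o2 : Fin 2,
        (∑ g ∈ univ.filter (fun g : Meas → Fin 2 => g a2 = o1 ∧ g b2 = o2), d g) =
          if o1 ≠ o2 then 1/2 else 0) := by
  rintro ⟨d, hsum, h11, h12, h21, h22⟩
  have hd : ∀ g, d g = 0 := by
    intro g
    by_contra hg
    have e11 : g a1 = g b1 := rel_of_ne_zero_of_marginal_eq_ite h11 g hg
    have e12 : g a1 = g b2 := rel_of_ne_zero_of_marginal_eq_ite h12 g hg
    have e21 : g a2 = g b1 := rel_of_ne_zero_of_marginal_eq_ite h21 g hg
    have e22 : g a2 ≠ g b2 := rel_of_ne_zero_of_marginal_eq_ite h22 g hg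
    exact e22 (by rw [e21, ← e11, e12])
  rw [sum_eq_zero fun g _ => hd g] at hsum
  exact zero_ne_one hsum
end

section
/- If an empirical model e is strongly contextual (the set of global assignments g with g|_C in the support of e_C for all contexts C is empty), then its noncontextual fraction is 0: in any convex decomposition e = λ·e^{NC} + (1−λ)·e' with e^{NC} noncontextual (i.e., arising as marginals of a global distribution), λ = 0. -/
open Finset

variable {X O : Type}

theorem margX_resX_pos [Fintype X] [DecidableEq X] [Fintype O] [DecidableEq O]
    {d : (X → O) → NNReal} {g : X → O} (hg : 0 < d g) (C : Finset X) :
    0 < margX C d (resX C g) :=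
  hg.trans_le <| single_le_sum (fun _ _ => zero_le) (mem_filter.mpr ⟨mem_univ g, rfl⟩)

theorem strongly_contextual_implies_ncf_zero_general
    [Fintype X] [DecidableEq X] [Fintype O] [DecidableEq O]
    (M : Finset (Finset X))
    (e eNC e' : (C : Finset X) → (↥C → O) → NNReal)
    (hSC : ¬ ∃ g : X → O, ∀ C ∈ M, 0 < e C (resX C g))
    (lam : NNReal)
    (hNC : ∃ d : (X → O) → NNReal, (∑ s : X → O, d s = 1) ∧ ∀ C ∈ M, margX C d = eNC C)
    (hdecomp : ∀ C ∈ M, ∀ s : ↥C → O, e C s = lam * eNC C s + (1 - lam) * e' C s) :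
    lam = 0 := by
  by_contra hlam
  obtain ⟨d, hd, hdm⟩ := hNC
  obtain ⟨g, -, hg⟩ := exists_ne_zero_of_sum_ne_zero (hd ▸ one_ne_zero : ∑ s, d s ≠ 0)
  refine hSC ⟨g, fun C hC => ?_⟩
  rw [hdecomp C hC, ← hdm C hC]
  exact add_pos_of_pos_of_nonneg
    (mul_pos (pos_iff_ne_zero.mpr hlam) (margX_resX_pos (pos_iff_ne_zero.mpr hg) C)) zero_le

/-- If an empirical model `e` is strongly contextual, then in any convex decomposition
`e = λ·e^NC + (1-λ)·e'` with `e^NC` noncontextual, `λ = 0` (so the noncontextual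
fraction of `e` is `0`). -/
theorem strongly_contextual_implies_ncf_zero
    [Fintype X] [DecidableEq X] [Fintype O] [DecidableEq O]
    (M : Finset (Finset X))
    (e eNC e' : (C : Finset X) → (↥C → O) → NNReal)
    (hSC : ¬ ∃ g : X → O, ∀ C ∈ M, 0 < e C (resX C g))
    (lam : NNReal) (hlam : lam ≤ 1)
    (hNC : ∃ d : (X → O) → NNReal, (∑ s : X → O, d s = 1) ∧ ∀ C ∈ M, margX C d = eNC C)
    (he'1 : ∀ C ∈ M, ∑ s : ↥C → O, e' C s = 1)
    (hdecomp : ∀ C ∈ M, ∀ s : ↥C → O, e C s = lam * eNC C s + (1 - lam) * e' C s) :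
    lam = 0 :=
  strongly_contextual_implies_ncf_zero_general M e eNC e' hSC lam hNC hdecomp
end

section
/- If an empirical model e is not strongly contextual, i.e., there exists a global assignment s with e_C(s|_C) > 0 for all contexts C, then the noncontextual fraction of e is positive: there exist λ > 0, a noncontextual model e^{NC}, and an empirical model e' with e = λ·e^{NC} + (1−λ)·e'. -/
open Finset

variable {X O : Type}

/-
A global assignment `g` that is possible in every context yields the deterministic model `δ_g`,
which is noncontextual. Since there are finitely many contexts, some `0 < λ < 1` lies below
every `e_C(g|_C)` (strictly below `1`, so that we may divide by `1 - λ`), hence `e - λ δ_g` is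
pointwise nonnegative. Normalization and compatibility are preserved by the affine map
`e ↦ (e - λ δ_g) / (1 - λ)` because both are conditions on marginal sums, and marginalization
commutes with it as long as no truncated subtraction occurs.
-/

lemma Finset.exists_between_forall_le {ι α : Type*} [LinearOrder α] [DenselyOrdered α]
    (s : Finset ι) (f : ι → α) {a b : α} (hab : a < b) (hf : ∀ i ∈ s, a < f i) :
    ∃ c, a < c ∧ c < b ∧ ∀ i ∈ s, c ≤ f i := by
  classical
  induction s using Finset.induction_on with
  | empty =>
    obtain ⟨c, hac, hcb⟩ := _root_.exists_between hab
    exact ⟨c, hac, hcb, by simp⟩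
  | insert i s _ ih =>
    obtain ⟨c, hac, hcb, hcs⟩ := ih fun j hj => hf j (mem_insert_of_mem hj)
    refine ⟨min c (f i), lt_min hac (hf i (mem_insert_self i s)),
      (min_le_left _ _).trans_lt hcb, ?_⟩
    simp only [mem_insert, forall_eq_or_imp, min_le_right, true_and]
    exact fun j hj => (min_le_left _ _).trans (hcs j hj)

lemma NNReal.sum_sub_mul_div {ι : Type*} (s : Finset ι) (f g : ι → NNReal) (c d : NNReal)
    (hle : ∀ i ∈ s, c * g i ≤ f i) :
    ∑ i ∈ s, (f i - c * g i) / d = (∑ i ∈ s, f i - c * ∑ i ∈ s, g i) / d := by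
  rw [← Finset.sum_div, Finset.sum_tsub_distrib s hle, Finset.mul_sum]

section EmpiricalModel

variable [DecidableEq X] [Fintype O] [DecidableEq O]

def IsNormalized (M : Finset (Finset X)) (e : (C : Finset X) → (↥C → O) → NNReal) : Prop :=
  ∀ C ∈ M, ∑ s : ↥C → O, e C s = 1

def IsCompatible (M : Finset (Finset X)) (e : (C : Finset X) → (↥C → O) → NNReal) : Prop :=
  ∀ C ∈ M, ∀ C' ∈ M,
    marg (inter_subset_left (s₁ := C) (s₂ := C')) (e C) =
      marg (inter_subset_right (s₁ := C) (s₂ := C')) (e C')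

def detModel (g : X → O) (C : Finset X) (t : ↥C → O) : NNReal :=
  if t = resX C g then 1 else 0

lemma marg_detModel {U C : Finset X} (h : U ⊆ C) (g : X → O) :
    marg h (detModel g C) = detModel g U := by
  funext u
  simp only [marg, detModel]
  rw [Finset.sum_ite_eq' _ (resX C g) (fun _ => (1 : NNReal))]
  simp only [mem_filter, mem_univ, true_and, eq_comm]
  rfl

lemma margX_ite_eq [Fintype X] (C : Finset X) (g : X → O) :
    margX C (fun s => if s = g then 1 else 0) = detModel g C := by
  funext u
  rw [margX, Finset.sum_ite_eq' _ g (fun _ => (1 : NNReal))]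
  simp only [mem_filter, mem_univ, true_and, detModel, eq_comm]

lemma isNormalized_detModel (M : Finset (Finset X)) (g : X → O) :
    IsNormalized M (detModel g) := by
  intro C _
  simp [detModel]

lemma isCompatible_detModel (M : Finset (Finset X)) (g : X → O) :
    IsCompatible M (detModel g) := by
  intro C _ C' _
  rw [marg_detModel, marg_detModel]

omit [DecidableEq X] [Fintype O] in
lemma mul_detModel_le {e : (C : Finset X) → (↥C → O) → NNReal} {g : X → O} {C : Finset X}
    {lam : NNReal} (hlam : lam ≤ e C (resX C g)) (t : ↥C → O) :
    lam * detModel g C t ≤ e C t := by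
  unfold detModel
  split_ifs with ht
  · rwa [mul_one, ht]
  · simp

end EmpiricalModel

noncomputable def residualModel (lam : NNReal) (p e : (C : Finset X) → (↥C → O) → NNReal)
    (C : Finset X) (t : ↥C → O) : NNReal :=
  (e C t - lam * p C t) / (1 - lam)

section ResidualModel

variable {M : Finset (Finset X)} {lam : NNReal} {p e : (C : Finset X) → (↥C → O) → NNReal}

lemma eq_add_residualModel (hlam : lam < 1) {C : Finset X} (hle : ∀ t, lam * p C t ≤ e C t)
    (t : ↥C → O) : e C t = lam * p C t + (1 - lam) * residualModel lam p e C t := by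
  rw [residualModel, mul_div_cancel₀ _ (tsub_pos_of_lt hlam).ne', add_tsub_cancel_of_le (hle t)]

lemma isNormalized_residualModel [DecidableEq X] [Fintype O] (hlam : lam < 1)
    (hle : ∀ C ∈ M, ∀ t, lam * p C t ≤ e C t) (hp : IsNormalized M p) (he : IsNormalized M e) :
    IsNormalized M (residualModel lam p e) := by
  intro C hC
  simp only [residualModel]
  rw [NNReal.sum_sub_mul_div _ _ _ _ _ fun t _ => hle C hC t, he C hC, hp C hC,
    mul_one, div_self (tsub_pos_of_lt hlam).ne']

lemma marg_residualModel [DecidableEq X] [Fintype O] [DecidableEq O] {U C : Finset X}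
    (h : U ⊆ C) (hle : ∀ t, lam * p C t ≤ e C t) :
    marg h (residualModel lam p e C) =
      fun u => (marg h (e C) u - lam * marg h (p C) u) / (1 - lam) :=
  funext fun _ => NNReal.sum_sub_mul_div _ _ _ _ _ fun t _ => hle t

lemma isCompatible_residualModel [DecidableEq X] [Fintype O] [DecidableEq O]
    (hle : ∀ C ∈ M, ∀ t, lam * p C t ≤ e C t) (hp : IsCompatible M p) (he : IsCompatible M e) :
    IsCompatible M (residualModel lam p e) := by
  intro C hC C' hC'
  rw [marg_residualModel _ (hle C hC), marg_residualModel _ (hle C' hC'), he C hC C' hC',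
    hp C hC C' hC']

end ResidualModel

/-- If an empirical model `e` is not strongly contextual — there is a global assignment
whose restriction has positive probability in every context — then its noncontextual
fraction is positive: `e` admits a convex decomposition `e = λ·e^NC + (1-λ)·e'` with
`λ > 0`, `e^NC` noncontextual, and `e'` an empirical model. -/
theorem not_strongly_contextual_implies_ncf_pos
    [Fintype X] [DecidableEq X] [Fintype O] [DecidableEq O]
    (M : Finset (Finset X))
    (e : (C : Finset X) → (↥C → O) → NNReal)
    (he1 : ∀ C ∈ M, ∑ s : ↥C → O, e C s = 1)
    (hec : ∀ C ∈ M, ∀ C' ∈ M,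
      marg (inter_subset_left (s₁ := C) (s₂ := C')) (e C) =
        marg (inter_subset_right (s₁ := C) (s₂ := C')) (e C'))
    (hs : ∃ g : X → O, ∀ C ∈ M, 0 < e C (resX C g)) :
    ∃ lam : NNReal, 0 < lam ∧ lam ≤ 1 ∧
      ∃ eNC e' : (C : Finset X) → (↥C → O) → NNReal,
        (∃ d : (X → O) → NNReal, (∑ s : X → O, d s = 1) ∧ ∀ C ∈ M, margX C d = eNC C) ∧
        (∀ C ∈ M, ∑ s : ↥C → O, e' C s = 1) ∧
        (∀ C ∈ M, ∀ C' ∈ M,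
          marg (inter_subset_left (s₁ := C) (s₂ := C')) (e' C) =
            marg (inter_subset_right (s₁ := C) (s₂ := C')) (e' C')) ∧
        (∀ C ∈ M, ∀ s : ↥C → O, e C s = lam * eNC C s + (1 - lam) * e' C s) := by
  obtain ⟨g, hg⟩ := hs
  obtain ⟨lam, hlam_pos, hlam_lt, hlam_le⟩ :=
    M.exists_between_forall_le (fun C => e C (resX C g)) zero_lt_one hg
  have hle : ∀ C ∈ M, ∀ t, lam * detModel g C t ≤ e C t :=
    fun C hC => mul_detModel_le (hlam_le C hC)
  refine ⟨lam, hlam_pos, hlam_lt.le, detModel g, residualModel lam (detModel g) e,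
    ⟨fun s => if s = g then 1 else 0, by simp, fun C _ => margX_ite_eq C g⟩,
    isNormalized_residualModel hlam_lt hle (isNormalized_detModel M g) he1,
    isCompatible_residualModel hle (isCompatible_detModel M g) hec,
    fun C hC => eq_add_residualModel hlam_lt (hle C hC)⟩
end

section
/- Let ρ be a density matrix and A1,...,Ak pairwise commuting self-adjoint involutions (A_i² = I) with A1·A2·...·Ak = (−1)^a·I. If λ1,...,λk ∈ {±1} are joint eigenvalues with nonzero probability under sequential projective measurement of A1,...,Ak on ρ (i.e., P := Π_i P_{λ_i} satisfies Tr(PρP) ≠ 0, where P_{λ_i} = (I + λ_i A_i)/2), then Π_i λ_i = (−1)^a. -/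
open scoped ComplexOrder

/-!
Each factor `(1 + λᵢ Aᵢ)/2` of `P` is an eigenvector of left multiplication by `Aᵢ` with
eigenvalue `λᵢ`, and since `Aᵢ` commutes with the other factors, so is `P` itself. Hence
`(A₁ ⋯ Aₖ) P = (λ₁ ⋯ λₖ) P`, while the product constraint gives `(A₁ ⋯ Aₖ) P = (-1)^a P`.
A nonzero trace `Tr(PρP)` forces `P ≠ 0`, so the two scalars agree.
-/

section Eigen

variable {R M : Type*} [CommSemiring R] [Semiring M] [Algebra R M]

theorem mul_smul_one_add_smul_eq_smul {x : M} {c : R} (hx : x * x = 1) (hc : c * c = 1)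
    (s : R) : x * (s • (1 + c • x)) = c • s • (1 + c • x) := by
  rw [mul_smul_comm, smul_comm c s]
  congr 1
  rw [mul_add, mul_one, mul_smul_comm, hx, smul_add, smul_smul, hc, one_smul, add_comm]

theorem mul_list_prod_eq_smul_of_mem {x y : M} {c : R} {l : List M}
    (hcomm : ∀ z ∈ l, Commute x z) (hy : y ∈ l) (hxy : x * y = c • y) :
    x * l.prod = c • l.prod := by
  induction l with
  | nil => simp at hy
  | cons z t ih =>
    rw [List.prod_cons]
    by_cases hyt : y ∈ t
    · rw [← mul_assoc, (hcomm z List.mem_cons_self).eq, mul_assoc,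
        ih (fun w hw => hcomm w (List.mem_cons_of_mem z hw)) hyt, mul_smul_comm]
    · obtain rfl : y = z := by simpa [hyt] using hy
      rw [← mul_assoc, hxy, smul_mul_assoc]

theorem List.prod_map_mul_eq_smul {ι : Type*} (l : List ι) (x : ι → M) (c : ι → R) {p : M}
    (h : ∀ i ∈ l, x i * p = c i • p) : (l.map x).prod * p = (l.map c).prod • p := by
  induction l with
  | nil => simp
  | cons i t ih =>
    rw [List.map_cons, List.map_cons, List.prod_cons, List.prod_cons, mul_assoc,
      ih fun j hj => h j (List.mem_cons_of_mem i hj), mul_smul_comm, h i List.mem_cons_self,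
      smul_smul, mul_comm]

end Eigen

theorem joint_eigenvalues_satisfy_product_constraint_general
    {d k : ℕ} (ρ : Matrix (Fin d) (Fin d) ℂ)
    (A : Fin k → Matrix (Fin d) (Fin d) ℂ)
    (hinv : ∀ i, A i * A i = 1)
    (hcomm : ∀ i j, Commute (A i) (A j))
    (a : ℕ)
    (hprod : ((List.finRange k).map A).prod = ((-1 : ℂ) ^ a) • (1 : Matrix (Fin d) (Fin d) ℂ))
    (lam : Fin k → ℂ) (hlam : ∀ i, lam i = 1 ∨ lam i = -1)
    (P : Matrix (Fin d) (Fin d) ℂ)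
    (hP : P = ((List.finRange k).map
      (fun i => ((1 : ℂ) / 2) • ((1 : Matrix (Fin d) (Fin d) ℂ) + lam i • A i))).prod)
    (hne : (P * ρ * P).trace ≠ 0) :
    ∏ i, lam i = (-1 : ℂ) ^ a := by
  have hP_eigen : ∀ i, A i * P = lam i • P := fun i => by
    rw [hP]
    refine mul_list_prod_eq_smul_of_mem ?_ (List.mem_map_of_mem (List.mem_finRange i))
      (mul_smul_one_add_smul_eq_smul (hinv i) (by rcases hlam i with h | h <;> simp [h]) _)
    simp only [List.mem_map, List.mem_finRange, true_and, forall_exists_index,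
      forall_apply_eq_imp_iff]
    exact fun j => ((Commute.one_right _).add_right ((hcomm i j).smul_right _)).smul_right _
  have hP_ne : P ≠ 0 := by
    rintro rfl
    simp at hne
  have hscalars := List.prod_map_mul_eq_smul (List.finRange k) A lam fun i _ => hP_eigen i
  rw [hprod, smul_one_mul, ← Fin.prod_univ_def] at hscalars
  exact (smul_left_injective ℂ hP_ne hscalars).symm

/-- If `ρ` is a density matrix and `A 0, …, A (k-1)` are pairwise commuting self-adjoint
involutions with product `(-1)^a • I`, then any tuple of joint eigenvalues
`λ i ∈ {±1}` that occurs with nonzero probability under sequential projective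
measurement (`P = Π (I + λ i • A i)/2`, `Tr(PρP) ≠ 0`) satisfies `Π λ i = (-1)^a`. -/
theorem joint_eigenvalues_satisfy_product_constraint
    {d k : ℕ} (ρ : Matrix (Fin d) (Fin d) ℂ)
    (hρ : ρ.PosSemidef) (hρtr : ρ.trace = 1)
    (A : Fin k → Matrix (Fin d) (Fin d) ℂ)
    (hherm : ∀ i, (A i).IsHermitian)
    (hinv : ∀ i, A i * A i = 1)
    (hcomm : ∀ i j, Commute (A i) (A j))
    (a : ℕ)
    (hprod : ((List.finRange k).map A).prod = ((-1 : ℂ) ^ a) • (1 : Matrix (Fin d) (Fin d) ℂ))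
    (lam : Fin k → ℂ) (hlam : ∀ i, lam i = 1 ∨ lam i = -1)
    (P : Matrix (Fin d) (Fin d) ℂ)
    (hP : P = ((List.finRange k).map
      (fun i => ((1 : ℂ) / 2) • ((1 : Matrix (Fin d) (Fin d) ℂ) + lam i • A i))).prod)
    (hne : (P * ρ * P).trace ≠ 0) :
    ∏ i, lam i = (-1 : ℂ) ^ a :=
  joint_eigenvalues_satisfy_product_constraint_general ρ A hinv hcomm a hprod lam hlam P hP hne
end

section
/- If a set X of Pauli operators admits determining trees τ_x for x and τ'_{−x} for −x over X with equal determining sets D(τ_x) = D(τ'_{−x}), then no global assignment g: X̄ → Z_2 on the partial closure X̄ of X can be consistent with all commuting-product relations in X̄ (i.e., X is state-independently AvN in a partial closure). -/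
open Finset
open scoped Classical

/-- The 2×2 Pauli matrices. -/
def sigmaX : Matrix (Fin 2) (Fin 2) ℂ := !![0, 1; 1, 0]
def sigmaY : Matrix (Fin 2) (Fin 2) ℂ := !![0, -Complex.I; Complex.I, 0]
def sigmaZ : Matrix (Fin 2) (Fin 2) ℂ := !![1, 0; 0, -1]

/-- The space of `n`-qubit operators. -/
abbrev PMat (n : ℕ) := Matrix (Fin n → Fin 2) (Fin n → Fin 2) ℂ

/-- The `n`-fold tensor (Kronecker) product of 2×2 matrices. -/
def tensorFold {n : ℕ} (f : Fin n → Matrix (Fin 2) (Fin 2) ℂ) : PMat n :=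
  Matrix.of fun p q => ∏ i, f i (p i) (q i)

/-- Membership in the Pauli `n`-group. -/
def IsPauli {n : ℕ} (P : PMat n) : Prop :=
  ∃ (c : ℂ) (f : Fin n → Matrix (Fin 2) (Fin 2) ℂ),
    (c = 1 ∨ c = -1 ∨ c = Complex.I ∨ c = -Complex.I) ∧
    (∀ i, f i = 1 ∨ f i = sigmaX ∨ f i = sigmaY ∨ f i = sigmaZ) ∧
    P = c • tensorFold f

/-- Membership in the partial closure `X̄` of `X`: the smallest set containing `X`
and the identity and closed under products of commuting elements. -/
inductive PC {n : ℕ} (X : Set (PMat n)) : PMat n → Prop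
  | base {x : PMat n} : x ∈ X → PC X x
  | one : PC X 1
  | mul {x y : PMat n} : PC X x → PC X y → Commute x y → PC X (x * y)

/-- `DTree X x L` : there is a determining tree for `x` over `X` with multiset of
leaves `L`. The children of every node pairwise commute and multiply to their
parent, and the leaves lie in `X`. -/
inductive DTree {n : ℕ} (X : Set (PMat n)) : PMat n → Multiset (PMat n) → Prop
  | leaf {x : PMat n} (hx : x ∈ X) : DTree X x {x}
  | node (cs : List (PMat n × Multiset (PMat n)))
      (hc : ∀ p ∈ cs, DTree X p.1 p.2)
      (hcomm : ∀ p ∈ cs, ∀ q ∈ cs, Commute p.1 q.1) :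
      DTree X ((cs.map Prod.fst).prod) ((cs.map Prod.snd).sum)

/-- `g` is a global assignment on the partial closure of `X` consistent with all
commuting-product relations: whenever pairwise-commuting elements of `X̄` have
product `(-1)^a • I`, the sum of their values is `a` mod 2. -/
def ConsistentAssignment {n : ℕ} (X : Set (PMat n)) (g : PMat n → ZMod 2) : Prop :=
  ∀ (l : List (PMat n)) (a : ℕ),
    (∀ y ∈ l, PC X y) → (∀ y ∈ l, ∀ z ∈ l, Commute y z) →
    l.prod = (-1 : PMat n) ^ a → (l.map g).sum = (a : ZMod 2)

/-!
Consistency propagates values up a determining tree: if the commuting children `y₁, …, yₖ ∈ X̄`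
of a node multiply to `y`, then `y₁ ⋯ yₖ · y = y²`, and `y² = I` because elements of `X̄` square
to `±I` while `y · y = -I` would force `2 g y = 1`. So `g y = ∑ g yᵢ`, and `g x`, `g (-x)` are
both sums of `g` over the leaves of their trees. Over `ℤ₂` such a sum only sees the leaves of odd
multiplicity, hence `g x = g (-x)`, contradicting `g x + g (-x) = 1` from `x · (-x) = -I`.
-/

namespace Multiset

variable {α R : Type*} [DecidableEq α] [Semiring R]

lemma sum_map_eq_sum_count_mul (g : α → R) {L : Multiset α} {s : Finset α}
    (hs : L.toFinset ⊆ s) : (L.map g).sum = ∑ y ∈ s, (L.count y : R) * g y := by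
  rw [Finset.sum_multiset_map_count, Finset.sum_subset hs]
  · simp [nsmul_eq_mul]
  · intro y _ hy
    simp [count_eq_zero.2 (by simpa using hy)]

lemma sum_map_eq_of_odd_count_iff [CharP R 2] (g : α → R) {L L' : Multiset α}
    (hD : ∀ y, Odd (L.count y) ↔ Odd (L'.count y)) :
    (L.map g).sum = (L'.map g).sum := by
  rw [sum_map_eq_sum_count_mul g Finset.subset_union_left,
    sum_map_eq_sum_count_mul g (Finset.subset_union_right (s₁ := L.toFinset))]
  refine Finset.sum_congr rfl fun y _ => ?_
  have hparity := hD y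
  rw [Nat.odd_iff, Nat.odd_iff] at hparity
  rw [CharTwo.natCast_eq_mod (L.count y), CharTwo.natCast_eq_mod (L'.count y),
    show L.count y % 2 = L'.count y % 2 by omega]

end Multiset

lemma sigmaX_mul_self : sigmaX * sigmaX = 1 := by
  simp [sigmaX, Matrix.one_fin_two]

lemma sigmaY_mul_self : sigmaY * sigmaY = 1 := by
  simp [sigmaY, Matrix.one_fin_two]

lemma sigmaZ_mul_self : sigmaZ * sigmaZ = 1 := by
  simp [sigmaZ, Matrix.one_fin_two]

lemma tensorFold_mul {n : ℕ} (f g : Fin n → Matrix (Fin 2) (Fin 2) ℂ) :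
    tensorFold f * tensorFold g = tensorFold (f * g) := by
  ext p q
  simp only [tensorFold, Matrix.mul_apply, Matrix.of_apply, Pi.mul_apply,
    Fintype.prod_sum, Finset.prod_mul_distrib]

lemma tensorFold_one {n : ℕ} : tensorFold (1 : Fin n → Matrix (Fin 2) (Fin 2) ℂ) = 1 := by
  ext p q
  by_cases hpq : p = q
  · simp [tensorFold, hpq, Matrix.one_apply]
  · obtain ⟨i, hi⟩ := Function.ne_iff.1 hpq
    simpa [tensorFold, Matrix.one_apply, hpq] using
      Finset.prod_eq_zero (Finset.mem_univ i) (by simp [hi])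

lemma IsPauli.mul_self {n : ℕ} {P : PMat n} (hP : IsPauli P) : P * P = 1 ∨ P * P = -1 := by
  obtain ⟨c, f, hc, hf, rfl⟩ := hP
  have hff : f * f = 1 := by
    ext1 i
    rcases hf i with h | h | h | h <;>
      simp [h, sigmaX_mul_self, sigmaY_mul_self, sigmaZ_mul_self]
  have hcc : c * c = 1 ∨ c * c = -1 := by
    rcases hc with rfl | rfl | rfl | rfl <;> simp
  rw [Matrix.smul_mul, Matrix.mul_smul, tensorFold_mul, hff, tensorFold_one, smul_smul]
  rcases hcc with h | h <;> simp [h]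

namespace PC

variable {n : ℕ} {X : Set (PMat n)}

lemma list_prod {l : List (PMat n)} (hl : ∀ y ∈ l, PC X y)
    (hcomm : ∀ y ∈ l, ∀ z ∈ l, Commute y z) : PC X l.prod := by
  induction l with
  | nil => exact PC.one
  | cons y t ih =>
    simp only [List.mem_cons, forall_eq_or_imp] at hl hcomm
    exact PC.mul hl.1 (ih hl.2 fun z hz w hw => hcomm.2 z hz |>.2 w hw)
      (Commute.list_prod_right _ _ hcomm.1.2)

lemma mul_self_eq_one_or_neg_one (hX : ∀ P ∈ X, IsPauli P) {y : PMat n} (hy : PC X y) :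
    y * y = 1 ∨ y * y = -1 := by
  induction hy with
  | base hx => exact (hX _ hx).mul_self
  | one => simp
  | mul _ _ hyz ihy ihz =>
    rw [hyz.symm.mul_mul_mul_comm]
    rcases ihy with h | h <;> rcases ihz with h' | h' <;> simp [h, h']

end PC

lemma DTree.partialClosure {n : ℕ} {X : Set (PMat n)} {x : PMat n} {L : Multiset (PMat n)}
    (t : DTree X x L) : PC X x := by
  induction t with
  | leaf hx => exact PC.base hx
  | node cs _ hcomm ih =>
    exact PC.list_prod (List.forall_mem_map.2 ih)
      (List.forall_mem_map.2 fun p hp => List.forall_mem_map.2 (hcomm p hp))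

namespace ConsistentAssignment

variable {n : ℕ} {X : Set (PMat n)} {g : PMat n → ZMod 2}

lemma add_eq_of_mul_eq (hg : ConsistentAssignment X g) {y z : PMat n} (hy : PC X y)
    (hz : PC X z) (hyz : Commute y z) {a : ℕ} (h : y * z = (-1) ^ a) : g y + g z = a := by
  simpa using hg [y, z] a (by simp [hy, hz]) (by simp [hyz, hyz.symm]) (by simpa using h)

lemma mul_self_eq_one (hX : ∀ P ∈ X, IsPauli P) (hg : ConsistentAssignment X g)
    {y : PMat n} (hy : PC X y) : y * y = 1 := by
  refine (PC.mul_self_eq_one_or_neg_one hX hy).resolve_right fun h => ?_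
  have := hg.add_eq_of_mul_eq hy hy (Commute.refl y) (a := 1) (by simpa using h)
  simp [CharTwo.add_self_eq_zero] at this

lemma sum_map_eq_apply_prod (hX : ∀ P ∈ X, IsPauli P) (hg : ConsistentAssignment X g)
    {l : List (PMat n)} (hl : ∀ y ∈ l, PC X y) (hcomm : ∀ y ∈ l, ∀ z ∈ l, Commute y z) :
    (l.map g).sum = g l.prod := by
  have hprod : PC X l.prod := PC.list_prod hl hcomm
  have hcomm_prod : ∀ y ∈ l, Commute y l.prod := fun y hy =>
    Commute.list_prod_right _ _ (hcomm y hy)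
  have := hg (l ++ [l.prod]) 0
    (by simpa [or_imp, forall_and] using ⟨hl, hprod⟩)
    (by
      simp only [List.mem_append, List.mem_singleton]
      rintro y (hy | rfl) z (hz | rfl)
      exacts [hcomm y hy z hz, hcomm_prod y hy, (hcomm_prod z hz).symm, Commute.refl _])
    (by simpa using hg.mul_self_eq_one hX hprod)
  simpa [CharTwo.add_eq_zero] using this

lemma sum_map_eq_of_dTree (hX : ∀ P ∈ X, IsPauli P) (hg : ConsistentAssignment X g)
    {x : PMat n} {L : Multiset (PMat n)} (t : DTree X x L) : (L.map g).sum = g x := by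
  induction t with
  | leaf => simp
  | node cs hc hcomm ih =>
    have hchildren : ∀ y ∈ cs.map Prod.fst, PC X y :=
      List.forall_mem_map.2 fun p hp => (hc p hp).partialClosure
    rw [← hg.sum_map_eq_apply_prod hX hchildren
      (List.forall_mem_map.2 fun p hp => List.forall_mem_map.2 (hcomm p hp))]
    refine (map_list_sum (Multiset.sumAddMonoidHom.comp (Multiset.mapAddMonoidHom g)) _).trans ?_
    rw [List.map_map, List.map_map]
    exact congrArg List.sum (List.map_congr_left ih)

lemma add_apply_neg_eq_one (hX : ∀ P ∈ X, IsPauli P) (hg : ConsistentAssignment X g)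
    {x : PMat n} (hx : PC X x) (hnx : PC X (-x)) : g x + g (-x) = 1 := by
  simpa using hg.add_eq_of_mul_eq hx hnx (Commute.refl x).neg_right (a := 1)
    (by simp [hg.mul_self_eq_one hX hx])

end ConsistentAssignment

/-- If a set `X` of Pauli operators admits determining trees for `x` and for `-x`
with equal determining sets (leaves of odd multiplicity), then `X` is
state-independently AvN in a partial closure: no global assignment on the partial
closure is consistent with all commuting-product relations. -/
theorem equal_determining_sets_implies_state_independent_avn
    {n : ℕ} (X : Set (PMat n)) (hX : ∀ P ∈ X, IsPauli P)
    (x : PMat n) (L L' : Multiset (PMat n))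
    (t1 : DTree X x L) (t2 : DTree X (-x) L')
    (hD : ∀ y : PMat n, Odd (L.count y) ↔ Odd (L'.count y)) :
    ¬ ∃ g : PMat n → ZMod 2, ConsistentAssignment X g := by
  rintro ⟨g, hg⟩
  have heq : g x = g (-x) := by
    rw [← hg.sum_map_eq_of_dTree hX t1, ← hg.sum_map_eq_of_dTree hX t2]
    exact Multiset.sum_map_eq_of_odd_count_iff g hD
  have hsum := hg.add_apply_neg_eq_one hX t1.partialClosure t2.partialClosure
  rw [heq, CharTwo.add_self_eq_zero] at hsum
  exact zero_ne_one hsum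
end
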